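/- Let x be a solution of the EigenAnt dynamics with positive initial conditions, assume at least one index j has d_j < d_1, and let i be an index with d_i = d_1. Define σ_1 := (1/(β d_1)) Σ_{j : d_j = d_1} x_j(0), d′_2 := max{ d_j : d_j < d_1 }, and σ_2 := (1/(β d′_2)) Σ_{j : d_j = d′_2} x_j(0). Then ( x_i(t) − x_i(0)/(α σ_1) ) · e^{α(1 − d′_2/d_1) t} → − x_i(0) (σ_2/σ_1) (α σ_1)^{−d′_2/d_1} as t → +∞. -/

import Mathlib

open Filter MeasureTheory Set Real

open scoped Topology

/-!
Let `w` be the antiderivative of `β / S` with `w 0 = 0`. Then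
`x t j = x 0 j * exp (d j * w t - α * t)`, and because the coordinates sum to `S`, the quantity
`∑ j, c j * exp (d j * w t) - exp (α * t) / α`
with `c j = x 0 j / (β * d j)` is conserved. Divided by `exp (α * t)` and written in terms of
`E t = exp (d₁ * w t - α * t)`, the conservation law reads
`σ₁ * E + ∑_{d j < d₁} c j * E ^ (d j / d₁) * exp (-(1 - d j / d₁) * α * t)
  = C * exp (-α t) + 1 / α`.
All terms on the left are nonnegative, so `E` is bounded; hence the subdominant terms decay and
`E → 1 / (α σ₁)`. Multiplying what remains by `exp ((1 - d₂' / d₁) * α * t)` leaves only the terms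
with `d j = d₂'` in the limit.
-/

theorem eq_of_hasDerivAt_zero_of_nonneg {f : ℝ → ℝ} (hf : ∀ t, 0 ≤ t → HasDerivAt f 0 t)
    {t : ℝ} (ht : 0 ≤ t) : f t = f 0 :=
  constant_of_has_deriv_right_zero (fun s hs => (hf s hs.1).continuousAt.continuousWithinAt)
    (fun s hs => (hf s hs.1).hasDerivWithinAt) t ⟨ht, le_rfl⟩

theorem eq_mul_exp_of_hasDerivAt_mul {y A a : ℝ → ℝ}
    (hy : ∀ t, 0 ≤ t → HasDerivAt y (a t * y t) t) (hA : ∀ t, 0 ≤ t → HasDerivAt A (a t) t)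
    {t : ℝ} (ht : 0 ≤ t) : y t = y 0 * exp (A t - A 0) := by
  have hconst : y t * exp (-A t) = y 0 * exp (-A 0) :=
    eq_of_hasDerivAt_zero_of_nonneg (f := fun u => y u * exp (-A u))
      (fun s hs => ((hy s hs).fun_mul (hA s hs).fun_neg.exp).congr_deriv (by ring)) ht
  rw [sub_eq_add_neg, exp_add, mul_left_comm, ← hconst, mul_left_comm, ← exp_add,
    add_neg_cancel, exp_zero, mul_one]

theorem exists_hasDerivAt_of_continuousOn_Ici {f : ℝ → ℝ} (hf : ContinuousOn f (Ici 0)) :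
    ∃ F : ℝ → ℝ, F 0 = 0 ∧ ∀ t, 0 ≤ t → HasDerivAt F (f t) t := by
  -- Extend `f` continuously to the left of `0` so that the integral has a two-sided derivative.
  set g : ℝ → ℝ := fun s => f (max s 0)
  have hg : Continuous g :=
    hf.comp_continuous (continuous_id.max continuous_const) fun s => le_max_right s 0
  refine ⟨fun t => ∫ s in (0 : ℝ)..t, g s, intervalIntegral.integral_same, fun t ht => ?_⟩
  have h := intervalIntegral.integral_hasDerivAt_right (hg.intervalIntegrable 0 t)
    (hg.stronglyMeasurableAtFilter _ _) hg.continuousAt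
  rwa [show g t = f t by simp only [g, max_eq_left ht]] at h

theorem Finset.sum_filter_div_mul_eq {ι : Type*} (s : Finset ι) (a d : ι → ℝ) (β p : ℝ) :
    ∑ j ∈ s with d j = p, a j / (β * d j) = 1 / (β * p) * ∑ j ∈ s with d j = p, a j := by
  rw [Finset.mul_sum]
  refine Finset.sum_congr rfl fun j hj => ?_
  rw [(Finset.mem_filter.1 hj).2]
  ring

section SumExp

variable {ι : Type*} [Fintype ι] {c d : ι → ℝ} {w : ℝ → ℝ} {α C d₁ : ℝ}

theorem dominant_add_sum_exp_ne_eq_of_sum_exp_eq {t : ℝ}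
    (hsum : ∑ j, c j * exp (d j * w t) = C + exp (α * t) / α) :
    (∑ j with d j = d₁, c j) * exp (d₁ * w t - α * t)
      + ∑ j with d j ≠ d₁, c j * exp (d j * w t - α * t) = C * exp (-(α * t)) + 1 / α := by
  have hterm : ∀ j, c j * exp (d j * w t - α * t) = c j * exp (d j * w t) * exp (-(α * t)) := by
    intro j
    rw [sub_eq_add_neg, exp_add, mul_assoc]
  calc (∑ j with d j = d₁, c j) * exp (d₁ * w t - α * t)
        + ∑ j with d j ≠ d₁, c j * exp (d j * w t - α * t)
      = ∑ j with d j = d₁, c j * exp (d j * w t - α * t)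
        + ∑ j with d j ≠ d₁, c j * exp (d j * w t - α * t) := by
        rw [Finset.sum_mul]
        congr 1
        exact Finset.sum_congr rfl fun j hj => by rw [(Finset.mem_filter.1 hj).2]
    _ = ∑ j, c j * exp (d j * w t - α * t) := Finset.sum_filter_add_sum_filter_not _ _ _
    _ = (C + exp (α * t) / α) * exp (-(α * t)) := by simp only [hterm, ← Finset.sum_mul, hsum]
    _ = C * exp (-(α * t)) + 1 / α := by
        rw [add_mul, div_mul_eq_mul_div, ← exp_add, add_neg_cancel, exp_zero]

theorem exists_le_of_sum_exp_eq (hα : 0 < α) (hc : ∀ j, 0 ≤ c j)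
    (hσ : 0 < ∑ j with d j = d₁, c j)
    (hsum : ∀ᶠ t in atTop, ∑ j, c j * exp (d j * w t) = C + exp (α * t) / α) :
    ∃ B, ∀ᶠ t in atTop, d₁ * w t - α * t ≤ B := by
  refine ⟨log ((|C| + 1 / α) / ∑ j with d j = d₁, c j), ?_⟩
  filter_upwards [hsum, eventually_ge_atTop 0] with t ht ht₀
  rw [le_log_iff_exp_le (by positivity), le_div_iff₀ hσ]
  have hsplit := dominant_add_sum_exp_ne_eq_of_sum_exp_eq (d₁ := d₁) ht
  have hrest : 0 ≤ ∑ j with d j ≠ d₁, c j * exp (d j * w t - α * t) :=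
    Finset.sum_nonneg fun j _ => mul_nonneg (hc j) (exp_pos _).le
  have hexp : exp (-(α * t)) ≤ 1 := exp_le_one_iff.2 (by nlinarith)
  have hC : C * exp (-(α * t)) ≤ |C| :=
    (mul_le_mul_of_nonneg_right (le_abs_self C) (exp_pos _).le).trans
      (mul_le_of_le_one_right (abs_nonneg C) hexp)
  linarith

theorem tendsto_exp_mul_sub_mul_of_le {B : ℝ} (hd₁ : 0 < d₁)
    (hB : ∀ᶠ t in atTop, d₁ * w t - α * t ≤ B) {p q : ℝ} (hp : 0 ≤ p) (hpq : p * α < q * d₁) :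
    Tendsto (fun t => exp (p * w t - q * t)) atTop (𝓝 0) := by
  -- `p w - q t = (p / d₁) (d₁ w - α t) + (p α / d₁ - q) t`, with a negative slope.
  have hslope : p * α / d₁ - q < 0 := by
    rw [sub_neg, div_lt_iff₀ hd₁]
    exact hpq
  refine tendsto_exp_atBot.comp (tendsto_atBot_mono' _ ?_ (tendsto_atBot_add_const_left _
    (p / d₁ * B) (tendsto_id.const_mul_atTop_of_neg hslope)))
  filter_upwards [hB] with t ht
  calc p * w t - q * t = p / d₁ * (d₁ * w t - α * t) + (p * α / d₁ - q) * t := by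
        field_simp
        ring
    _ ≤ p / d₁ * B + (p * α / d₁ - q) * id t :=
        add_le_add_left (mul_le_mul_of_nonneg_left ht (div_nonneg hp hd₁.le)) _

theorem tendsto_exp_dominant_of_sum_exp_eq (hα : 0 < α) (hd₁ : 0 < d₁) (hc : ∀ j, 0 ≤ c j)
    (hd : ∀ j, 0 ≤ d j) (hdle : ∀ j, d j ≤ d₁) (hσ : 0 < ∑ j with d j = d₁, c j)
    (hsum : ∀ᶠ t in atTop, ∑ j, c j * exp (d j * w t) = C + exp (α * t) / α) :
    Tendsto (fun t => exp (d₁ * w t - α * t)) atTop (𝓝 (1 / (α * ∑ j with d j = d₁, c j))) := by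
  set σ := ∑ j with d j = d₁, c j
  obtain ⟨B, hB⟩ := exists_le_of_sum_exp_eq hα hc hσ hsum
  have hrest : Tendsto (fun t => ∑ j with d j ≠ d₁, c j * exp (d j * w t - α * t))
      atTop (𝓝 0) := by
    rw [← Finset.sum_const_zero (s := Finset.univ.filter fun j => d j ≠ d₁)]
    refine tendsto_finsetSum _ fun j hj => ?_
    have hlt : d j * α < α * d₁ := by
      rw [mul_comm]
      exact mul_lt_mul_of_pos_left ((hdle j).lt_of_ne (Finset.mem_filter.1 hj).2) hα
    simpa using (tendsto_exp_mul_sub_mul_of_le hd₁ hB (hd j) hlt).const_mul (c j)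
  have hlim : Tendsto (fun t => (C * exp (-(α * t)) + 1 / α
      - ∑ j with d j ≠ d₁, c j * exp (d j * w t - α * t)) / σ)
      atTop (𝓝 ((C * 0 + 1 / α - 0) / σ)) :=
    ((((tendsto_exp_neg_atTop_nhds_zero.comp (tendsto_id.const_mul_atTop hα)).const_mul C).add_const
      _).sub hrest).div_const σ
  rw [mul_zero, zero_add, sub_zero, div_div] at hlim
  refine hlim.congr' ?_
  filter_upwards [hsum] with t ht
  rw [← dominant_add_sum_exp_ne_eq_of_sum_exp_eq (d₁ := d₁) ht, add_sub_cancel_right,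
    mul_div_cancel_left₀ _ hσ.ne']

theorem tendsto_sub_mul_exp_of_sum_exp_eq {d₂ : ℝ} (hα : 0 < α) (hd₁ : 0 < d₁)
    (hc : ∀ j, 0 ≤ c j) (hd : ∀ j, 0 ≤ d j) (hdle : ∀ j, d j ≤ d₁)
    (hσ : 0 < ∑ j with d j = d₁, c j) (hd₂ : 0 < d₂) (hd₂₁ : d₂ < d₁)
    (hd₂max : ∀ j, d j < d₁ → d j ≤ d₂)
    (hsum : ∀ᶠ t in atTop, ∑ j, c j * exp (d j * w t) = C + exp (α * t) / α) :
    Tendsto (fun t => ((∑ j with d j = d₁, c j) * exp (d₁ * w t - α * t) - 1 / α)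
        * exp (α * (1 - d₂ / d₁) * t)) atTop
      (𝓝 (-((∑ j with d j = d₂, c j) * (α * ∑ j with d j = d₁, c j) ^ (-(d₂ / d₁))))) := by
  set σ₁ := ∑ j with d j = d₁, c j
  set σ₂ := ∑ j with d j = d₂, c j
  set r := d₂ / d₁
  have hr : r * d₁ = d₂ := div_mul_cancel₀ d₂ hd₁.ne'
  obtain ⟨B, hB⟩ := exists_le_of_sum_exp_eq hα hc hσ hsum
  have hE := tendsto_exp_dominant_of_sum_exp_eq hα hd₁ hc hd hdle hσ hsum
  have hterm : ∀ j, d j ≠ d₁ → Tendsto (fun t => exp (d j * w t - α * r * t)) atTop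
      (𝓝 (if d j = d₂ then (α * σ₁) ^ (-r) else 0)) := by
    intro j hj
    split_ifs with hj₂
    · have hlim := hE.rpow_const (p := r) (Or.inl (by positivity))
      rw [one_div, inv_rpow (by positivity), ← rpow_neg (by positivity)] at hlim
      refine hlim.congr fun t => ?_
      rw [← exp_mul, hj₂, ← hr]
      ring_nf
    · have hlt : d j < d₂ := (hd₂max j ((hdle j).lt_of_ne hj)).lt_of_ne hj₂
      refine tendsto_exp_mul_sub_mul_of_le hd₁ hB (hd j) ?_
      rw [mul_assoc, hr, mul_comm]
      exact mul_lt_mul_of_pos_left hlt hα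
  have hrest : Tendsto (fun t => ∑ j with d j ≠ d₁, c j * exp (d j * w t - α * r * t)) atTop
      (𝓝 (σ₂ * (α * σ₁) ^ (-r))) := by
    have hval : ∑ j with d j ≠ d₁, c j * (if d j = d₂ then (α * σ₁) ^ (-r) else 0)
        = σ₂ * (α * σ₁) ^ (-r) := by
      simp only [mul_ite, mul_zero]
      rw [← Finset.sum_filter, Finset.filter_filter, Finset.sum_mul]
      refine Finset.sum_congr (Finset.filter_congr fun j _ => ?_) fun _ _ => rfl
      exact ⟨fun h => h.2, fun h => ⟨h ▸ hd₂₁.ne, h⟩⟩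
    rw [← hval]
    exact tendsto_finsetSum _ fun j hj => (hterm j (Finset.mem_filter.1 hj).2).const_mul (c j)
  have hC : Tendsto (fun t => C * exp (-(α * r * t))) atTop (𝓝 0) := by
    simpa using (tendsto_exp_neg_atTop_nhds_zero.comp
      (tendsto_id.const_mul_atTop (by positivity : 0 < α * r))).const_mul C
  rw [← zero_sub]
  refine (hC.sub hrest).congr' ?_
  filter_upwards [hsum] with t ht
  have hsplit := dominant_add_sum_exp_ne_eq_of_sum_exp_eq (d₁ := d₁) ht
  rw [show σ₁ * exp (d₁ * w t - α * t) - 1 / α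
      = C * exp (-(α * t)) - ∑ j with d j ≠ d₁, c j * exp (d j * w t - α * t) by linarith,
    sub_mul, Finset.sum_mul, mul_assoc C, ← exp_add]
  congr 1
  · congr 2
    ring
  · refine Finset.sum_congr rfl fun j _ => ?_
    rw [mul_assoc (c j), ← exp_add]
    congr 2
    ring

end SumExp

namespace EigenAnt

variable {ι : Type*} [Fintype ι] {α β : ℝ} {d : ι → ℝ} {x : ℝ → ι → ℝ} {w : ℝ → ℝ}

theorem exists_potential (hS : ∀ t, 0 ≤ t → ∑ j, x t j ≠ 0)
    (hode : ∀ i t, 0 ≤ t →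
      HasDerivAt (fun s => x s i) ((-α + β * d i / ∑ j, x t j) * x t i) t) :
    ∃ w : ℝ → ℝ, w 0 = 0 ∧ ∀ t, 0 ≤ t → HasDerivAt w (β / ∑ j, x t j) t := by
  refine exists_hasDerivAt_of_continuousOn_Ici fun t ht => ?_
  have hsum := HasDerivAt.fun_sum (u := Finset.univ) fun j _ => hode j t ht
  exact (continuousAt_const.div hsum.continuousAt (hS t ht)).continuousWithinAt

theorem eq_mul_exp
    (hode : ∀ i t, 0 ≤ t →
      HasDerivAt (fun s => x s i) ((-α + β * d i / ∑ j, x t j) * x t i) t)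
    (hw : ∀ t, 0 ≤ t → HasDerivAt w (β / ∑ j, x t j) t) (hw0 : w 0 = 0) (j : ι) {t : ℝ}
    (ht : 0 ≤ t) : x t j = x 0 j * exp (d j * w t - α * t) := by
  have h := eq_mul_exp_of_hasDerivAt_mul (y := fun s => x s j)
    (A := fun s => d j * w s - α * s) (hode j) (fun s hs =>
      (((hw s hs).const_mul (d j)).sub ((hasDerivAt_id s).const_mul α)).congr_deriv (by ring)) ht
  simpa [hw0] using h

theorem sum_div_mul_exp_eq (hα : α ≠ 0) (hβ : β ≠ 0) (hd : ∀ j, d j ≠ 0)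
    (hS : ∀ t, 0 ≤ t → ∑ j, x t j ≠ 0)
    (hode : ∀ i t, 0 ≤ t →
      HasDerivAt (fun s => x s i) ((-α + β * d i / ∑ j, x t j) * x t i) t)
    (hw : ∀ t, 0 ≤ t → HasDerivAt w (β / ∑ j, x t j) t) (hw0 : w 0 = 0) {t : ℝ} (ht : 0 ≤ t) :
    ∑ j, x 0 j / (β * d j) * exp (d j * w t)
      = (∑ j, x 0 j / (β * d j) - 1 / α) + exp (α * t) / α := by
  -- Along the solution `x 0 j * exp (d j * w s) = x s j * exp (α * s)`, and these sum to `S s`.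
  have hterm : ∀ s, 0 ≤ s → ∀ j, x 0 j / (β * d j) * (exp (d j * w s) * (d j * (β / ∑ k, x s k)))
      = x s j * exp (α * s) / ∑ k, x s k := by
    intro s hs j
    rw [eq_mul_exp hode hw hw0 j hs, exp_sub]
    field_simp [hd j]
  have hderiv : ∀ s, 0 ≤ s → HasDerivAt
      (fun u => ∑ j, x 0 j / (β * d j) * exp (d j * w u) - exp (α * u) / α) 0 s := by
    intro s hs
    refine ((HasDerivAt.fun_sum fun j _ => (((hw s hs).const_mul (d j)).exp).const_mul
      (x 0 j / (β * d j))).sub (((hasDerivAt_id s).const_mul α).exp.div_const α)).congr_deriv ?_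
    rw [Finset.sum_congr rfl fun j _ => hterm s hs j, ← Finset.sum_div, ← Finset.sum_mul,
      mul_div_cancel_left₀ _ (hS s hs), id, mul_one, mul_div_cancel_right₀ _ hα, sub_self]
  have h := eq_of_hasDerivAt_zero_of_nonneg hderiv ht
  simp only [hw0, mul_zero, exp_zero, mul_one] at h
  linarith

end EigenAnt

theorem stmt17_general
    (n : ℕ) (hn : 0 < n) (α β : ℝ) (hα : 0 < α) (hβ : 0 < β)
    (d : Fin n → ℝ) (hd : ∀ i j : Fin n, i ≤ j → d j ≤ d i) (hdpos : ∀ i, 0 < d i)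
    (x : ℝ → Fin n → ℝ)
    (hS : ∀ t : ℝ, 0 ≤ t → (∑ j, x t j) ≠ 0)
    (hode : ∀ (i : Fin n) (t : ℝ), 0 ≤ t →
      HasDerivAt (fun s => x s i) ((-α + β * d i / (∑ j, x t j)) * x t i) t)
    (hx0 : ∀ i, 0 < x 0 i)
    (i : Fin n) (hi : d i = d ⟨0, hn⟩)
    (σ1 σ2 d2 : ℝ)
    (hσ1 : σ1 = (1 / (β * d ⟨0, hn⟩)) * ∑ j ∈ Finset.univ.filter (fun j => d j = d ⟨0, hn⟩), x 0 j)
    (hd2mem : ∃ j, d j = d2) (hd2lt : d2 < d ⟨0, hn⟩)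
    (hd2max : ∀ j, d j < d ⟨0, hn⟩ → d j ≤ d2)
    (hσ2 : σ2 = (1 / (β * d2)) * ∑ j ∈ Finset.univ.filter (fun j => d j = d2), x 0 j) :
    Tendsto (fun t => (x t i - x 0 i / (α * σ1)) * Real.exp (α * (1 - d2 / d ⟨0, hn⟩) * t))
      atTop (nhds (-(x 0 i) * (σ2 / σ1) * (α * σ1) ^ (-(d2 / d ⟨0, hn⟩)))) := by
  obtain ⟨w, hw0, hw⟩ := EigenAnt.exists_potential hS hode
  set c : Fin n → ℝ := fun j => x 0 j / (β * d j)
  have hσ1c : σ1 = ∑ j with d j = d ⟨0, hn⟩, c j := by rw [hσ1, Finset.sum_filter_div_mul_eq]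
  have hσ2c : σ2 = ∑ j with d j = d2, c j := by rw [hσ2, Finset.sum_filter_div_mul_eq]
  have hσ1pos : 0 < σ1 := hσ1c ▸ Finset.sum_pos (fun j _ => div_pos (hx0 j) (mul_pos hβ (hdpos j)))
    ⟨i, Finset.mem_filter.2 ⟨Finset.mem_univ i, hi⟩⟩
  have hd2pos : 0 < d2 := by
    obtain ⟨j, rfl⟩ := hd2mem
    exact hdpos j
  have hlim := tendsto_sub_mul_exp_of_sum_exp_eq (c := c) hα (hdpos _)
    (fun j => div_nonneg (hx0 j).le (mul_pos hβ (hdpos j)).le) (fun j => (hdpos j).le)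
    (fun j => hd _ j (Nat.zero_le j.val)) (hσ1c ▸ hσ1pos) hd2pos hd2lt hd2max
    ((eventually_ge_atTop 0).mono fun t ht => EigenAnt.sum_div_mul_exp_eq hα.ne' hβ.ne'
      (fun j => (hdpos j).ne') hS hode hw hw0 ht)
  rw [← hσ1c, ← hσ2c] at hlim
  rw [show -(x 0 i) * (σ2 / σ1) * (α * σ1) ^ (-(d2 / d ⟨0, hn⟩))
      = x 0 i / σ1 * -(σ2 * (α * σ1) ^ (-(d2 / d ⟨0, hn⟩))) by ring]
  refine (hlim.const_mul (x 0 i / σ1)).congr' ?_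
  filter_upwards [eventually_ge_atTop 0] with t ht
  rw [EigenAnt.eq_mul_exp hode hw hw0 i ht, hi]
  field_simp

theorem stmt17
    (n : ℕ) (hn : 0 < n) (α β : ℝ) (hα : 0 < α) (hβ : 0 < β)
    (d : Fin n → ℝ) (hd : ∀ i j : Fin n, i ≤ j → d j ≤ d i) (hdpos : ∀ i, 0 < d i)
    (x : ℝ → Fin n → ℝ)
    (hS : ∀ t : ℝ, 0 ≤ t → (∑ j, x t j) ≠ 0)
    (hode : ∀ (i : Fin n) (t : ℝ), 0 ≤ t →
      HasDerivAt (fun s => x s i) ((-α + β * d i / (∑ j, x t j)) * x t i) t)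
    (hx0 : ∀ i, 0 < x 0 i)
    (hsub : ∃ j, d j < d ⟨0, hn⟩)
    (i : Fin n) (hi : d i = d ⟨0, hn⟩)
    (σ1 σ2 d2 : ℝ)
    (hσ1 : σ1 = (1 / (β * d ⟨0, hn⟩)) * ∑ j ∈ Finset.univ.filter (fun j => d j = d ⟨0, hn⟩), x 0 j)
    (hd2mem : ∃ j, d j = d2) (hd2lt : d2 < d ⟨0, hn⟩)
    (hd2max : ∀ j, d j < d ⟨0, hn⟩ → d j ≤ d2)
    (hσ2 : σ2 = (1 / (β * d2)) * ∑ j ∈ Finset.univ.filter (fun j => d j = d2), x 0 j) :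
    Tendsto (fun t => (x t i - x 0 i / (α * σ1)) * Real.exp (α * (1 - d2 / d ⟨0, hn⟩) * t))
      atTop (nhds (-(x 0 i) * (σ2 / σ1) * (α * σ1) ^ (-(d2 / d ⟨0, hn⟩)))) :=
  stmt17_general n hn α β hα hβ d hd hdpos x hS hode hx0 i hi σ1 σ2 d2 hσ1 hd2mem hd2lt hd2max hσ2
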